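/- arXiv:1208.3992 — 4 statements merged into one kernel-verified Lean document; each statement's English description precedes it below -/
import Mathlib

section
/- The Baumslag-Solitar group BS(1,m) is residually finite for every nonzero integer m. -/
/-- The single relator `t a t⁻¹ a⁻ᵐ` defining the Baumslag–Solitar group
`BS(1,m) = ⟨a, t ; t a t⁻¹ = aᵐ⟩`; generator `false` is `a`, generator `true` is `t`. -/
def BSrels (m : ℤ) : Set (FreeGroup Bool) :=
  {FreeGroup.of true * FreeGroup.of false * (FreeGroup.of true)⁻¹ * (FreeGroup.of false ^ m)⁻¹}

/-- The Baumslag–Solitar group `BS(1,m)`. -/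
def BS (m : ℤ) : Type := PresentedGroup (BSrels m)

instance (m : ℤ) : Group (BS m) := by unfold BS; infer_instance

/-!
Every element of `BS(1,m)` can be written `t⁻ⁱ aʲ tᵏ` with `i k : ℕ`. If `i ≠ k`, it survives
in the quotient `ℤ/n` (`a ↦ 0`, `t ↦ 1`) for `n > |k - i|`. If `i = k`, it is conjugate to `aʲ`
with `j ≠ 0`, and `aʲ` acts nontrivially in the affine action of `BS(1,m)` on `ℤ/p`
(`t : x ↦ m x`, `a : x ↦ x + 1`) for any prime `p > |m|, |j|`.
-/

theorem ZMod.intCast_ne_zero_of_natAbs_lt {x : ℤ} {n : ℕ} (hx : x ≠ 0) (hxn : x.natAbs < n) :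
    (x : ZMod n) ≠ 0 := by
  rw [Ne, ZMod.intCast_zmod_eq_zero_iff_dvd]
  exact fun hdvd => hx (Int.eq_zero_of_dvd_of_natAbs_lt_natAbs hdvd hxn)

namespace BS

variable {m : ℤ}

def a (m : ℤ) : BS m := PresentedGroup.of false

def t (m : ℤ) : BS m := PresentedGroup.of true

theorem t_mul_a_mul_t_inv : t m * a m * (t m)⁻¹ = a m ^ m :=
  PresentedGroup.mk_eq_mk_of_mul_inv_mem (Set.mem_singleton _)

theorem semiconjBy_t_a_zpow (j : ℤ) : SemiconjBy (t m) (a m ^ j) (a m ^ (m * j)) := by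
  have h : SemiconjBy (t m) (a m) (a m ^ m) := by
    rw [SemiconjBy, ← t_mul_a_mul_t_inv, inv_mul_cancel_right]
  simpa only [zpow_mul] using h.zpow_right j

theorem t_pow_mul_a_zpow (k : ℕ) (j : ℤ) : t m ^ k * a m ^ j = a m ^ (m ^ k * j) * t m ^ k := by
  induction k generalizing j with
  | zero => simp
  | succ k ih =>
    rw [pow_succ, mul_assoc, (semiconjBy_t_a_zpow j).eq, ← mul_assoc, ih, mul_assoc, pow_succ,
      mul_assoc (m ^ k)]

def lift {G : Type*} [Group G] (x y : G) (h : y * x * y⁻¹ = x ^ m) : BS m →* G :=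
  PresentedGroup.toGroup (f := fun b => if b then y else x) <| by
    rintro r rfl
    simpa [map_zpow] using mul_inv_eq_one.mpr h

section lift

variable {G : Type*} [Group G] {x y : G} (h : y * x * y⁻¹ = x ^ m)

@[simp] theorem lift_a : lift x y h (a m) = x := PresentedGroup.toGroup.of _

@[simp] theorem lift_t : lift x y h (t m) = y := PresentedGroup.toGroup.of _

end lift

theorem exists_eq_t_pow_inv_mul_a_zpow_mul_t_pow (g : BS m) :
    ∃ (i : ℕ) (j : ℤ) (k : ℕ), g = (t m ^ i)⁻¹ * a m ^ j * t m ^ k := by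
  have hg : g ∈ Subgroup.closure (Set.range PresentedGroup.of) := by
    rw [PresentedGroup.closure_range_of]; exact Subgroup.mem_top g
  have mul_a_zpow (i k : ℕ) (j e : ℤ) : (t m ^ i)⁻¹ * a m ^ j * t m ^ k * a m ^ e =
      (t m ^ i)⁻¹ * a m ^ (j + m ^ k * e) * t m ^ k := by
    rw [mul_assoc _ (t m ^ k), t_pow_mul_a_zpow, zpow_add]; group
  induction hg using Subgroup.closure_induction_right with
  | one => exact ⟨0, 0, 0, by simp⟩
  | mul_right x _ y hy ih =>
    obtain ⟨i, j, k, rfl⟩ := ih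
    obtain ⟨_ | _, rfl⟩ := hy
    · exact ⟨i, j + m ^ k * 1, k, by rw [← mul_a_zpow, zpow_one]; rfl⟩
    · refine ⟨i, j, k + 1, ?_⟩
      change _ * t m = _
      group
  | mul_inv_cancel x _ y hy ih =>
    obtain ⟨i, j, k, rfl⟩ := ih
    obtain ⟨_ | _, rfl⟩ := hy
    · exact ⟨i, j + m ^ k * (-1), k, by rw [← mul_a_zpow, zpow_neg_one]; rfl⟩
    · change ∃ i' j' k', _ * (t m)⁻¹ = _
      cases k with
      | zero =>
        refine ⟨i + 1, m * j, 0, ?_⟩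
        rw [pow_zero, mul_one, mul_assoc, ← (semiconjBy_t_a_zpow j).inv_symm_left.eq, pow_succ,
          mul_inv_rev]
        group
      | succ k => exact ⟨i, j, k, by group⟩

def affineAction {R : Type*} [CommRing R] (u : Rˣ) (hu : (u : R) = m) : BS m →* Equiv.Perm R :=
  lift (Equiv.addRight 1) (MulAction.toPerm u) <| by
    ext x
    simp [Equiv.zsmul_addRight, Units.smul_def, ← hu]

theorem affineAction_a_zpow {R : Type*} [CommRing R] (u : Rˣ) (hu : (u : R) = m) (j : ℤ) :
    affineAction u hu (a m ^ j) = Equiv.addRight (j : R) := by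
  simp [affineAction, Equiv.zsmul_addRight]

def tExponent (m : ℤ) : BS m →* Multiplicative ℤ :=
  lift 1 (.ofAdd 1) (by simp)

theorem tExponent_t_pow_inv_mul_a_zpow_mul_t_pow (i k : ℕ) (j : ℤ) :
    tExponent m ((t m ^ i)⁻¹ * a m ^ j * t m ^ k) = .ofAdd ((k : ℤ) - i) := by
  simp [tExponent, ← ofAdd_nsmul, ← ofAdd_neg, ← ofAdd_add, sub_eq_neg_add]

theorem exists_finite_monoidHom_apply_a_zpow_ne_one (hm : m ≠ 0) {j : ℤ} (hj : j ≠ 0) :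
    ∃ (Q : Type) (_ : Group Q) (_ : Finite Q) (φ : BS m →* Q), φ (a m ^ j) ≠ 1 := by
  obtain ⟨p, hp_gt, hp⟩ := Nat.exists_infinite_primes (max m.natAbs j.natAbs + 1)
  have : Fact p.Prime := ⟨hp⟩
  have hmp : (m : ZMod p) ≠ 0 := ZMod.intCast_ne_zero_of_natAbs_lt hm (by omega)
  have hjp : (j : ZMod p) ≠ 0 := ZMod.intCast_ne_zero_of_natAbs_lt hj (by omega)
  refine ⟨Equiv.Perm (ZMod p), inferInstance, inferInstance,
    affineAction (Units.mk0 _ hmp) (Units.val_mk0 hmp), ?_⟩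
  rw [affineAction_a_zpow]
  exact fun h => hjp (by simpa using congr($h 0))

theorem exists_finite_monoidHom_apply_ne_one_of_ne {i k : ℕ} (hik : i ≠ k) (j : ℤ) :
    ∃ (Q : Type) (_ : Group Q) (_ : Finite Q) (φ : BS m →* Q),
      φ ((t m ^ i)⁻¹ * a m ^ j * t m ^ k) ≠ 1 := by
  have hd : (k : ℤ) - i ≠ 0 := by omega
  refine ⟨Multiplicative (ZMod (((k : ℤ) - i).natAbs + 1)), inferInstance, inferInstance,
    (Int.castAddHom _).toMultiplicative.comp (tExponent m), ?_⟩
  rw [MonoidHom.comp_apply, tExponent_t_pow_inv_mul_a_zpow_mul_t_pow]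
  exact mt ofAdd_eq_one.mp (ZMod.intCast_ne_zero_of_natAbs_lt hd (Nat.lt_add_one _))

end BS

/-- `BS(1,m)` is residually finite for every nonzero integer `m`: every nontrivial
element is detected by a homomorphism to a finite group. -/
theorem BS_one_m_residually_finite (m : ℤ) (hm : m ≠ 0) (g : BS m) (hg : g ≠ 1) :
    ∃ (Q : Type) (_ : Group Q) (_ : Finite Q) (φ : BS m →* Q), φ g ≠ 1 := by
  obtain ⟨i, j, k, rfl⟩ := BS.exists_eq_t_pow_inv_mul_a_zpow_mul_t_pow g
  rcases eq_or_ne i k with rfl | hik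
  · have hj : j ≠ 0 := by
      rintro rfl
      simp at hg
    obtain ⟨Q, _, _, φ, hφ⟩ := BS.exists_finite_monoidHom_apply_a_zpow_ne_one hm hj
    refine ⟨Q, inferInstance, inferInstance, φ, fun h => hφ ?_⟩
    exact (conj_eq_one_iff (a := (φ (BS.t m ^ i))⁻¹)).mp (by simpa [mul_assoc] using h)
  · exact BS.exists_finite_monoidHom_apply_ne_one_of_ne hik j
end

section
/- In the free product with amalgamation G = F₁ *_{U=V} F₂ where U = gⁿ (n > 1) in the free group F₁ and V = hᵐ (m > 1) in the free group F₂, the subgroup H generated by gⁿ and gh is free abelian of rank 2. -/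
/-!
Send the presented group to the amalgamated product `A *_ℤ B` of the two free groups, where
`1 ∈ ℤ` goes to `gⁿ` and to `hᵐ`. There `x = gⁿ = hᵐ` commutes with `y = g h`, so it suffices
to show `xᵃ yᵇ ≠ 1` unless `a = b = 0`. After inverting we may take `b ≥ 0`. For `b > 0`,
`xᵃ yᵇ = (gⁿᵃ g) h (g h)ᵇ⁻¹` is an alternating word none of whose letters lies in `⟨gⁿ⟩` or
`⟨hᵐ⟩` (free groups are torsion-free and `n, m > 1`), so it is nontrivial by the normal form
theorem for amalgamated products. For `b = 0` the factors embed and `gⁿ` has infinite order.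
-/

open Function Subgroup Monoid PushoutI CoprodI

section TorsionFree

variable {G : Type*} [Group G] [IsMulTorsionFree G] {g : G}

lemma zpowersHom_pow_injective (hg : g ≠ 1) {n : ℕ} (hn : n ≠ 0) :
    Injective (zpowersHom G (g ^ n)) := fun _ _ hab =>
  Multiplicative.toAdd.injective <| injective_zpow_iff_not_isOfFinOrder.mpr
    (not_isOfFinOrder_of_isMulTorsionFree ((pow_eq_one_iff_left hn).not.mpr hg)) hab

lemma self_notMem_zpowers_pow (hg : g ≠ 1) {n : ℕ} (hn : 1 < n) : g ∉ zpowers (g ^ n) := by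
  rintro ⟨k, hk⟩
  have hnk : (n : ℤ) * k = 1 := injective_zpow_iff_not_isOfFinOrder.mpr
    (not_isOfFinOrder_of_isMulTorsionFree hg) (by simpa [zpow_mul] using hk)
  have := Int.eq_one_of_mul_eq_one_right (by omega) hnk
  omega

end TorsionFree

lemma Commute.pow_mul_of_pow_eq_pow {M : Type*} [Monoid M] {u v : M} {n m : ℕ}
    (h : u ^ n = v ^ m) : Commute (u ^ n) (u * v) :=
  (Commute.pow_self u n).mul_right (by rw [h]; exact Commute.pow_self v m)

lemma Commute.nonempty_closure_pair_mulEquiv {G : Type*} [Group G] {x y : G} (hxy : Commute x y)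
    (hind : ∀ a b : ℤ, x ^ a * y ^ b = 1 → a = 0 ∧ b = 0) :
    Nonempty (closure {x, y} ≃* Multiplicative (ℤ × ℤ)) := by
  let θ := (zpowersHom G x).noncommCoprod (zpowersHom G y) fun a b => hxy.zpow_zpow _ _
  have hθ : Injective θ := (injective_iff_map_eq_one θ).mpr fun p hp =>
    Prod.ext (hind _ _ hp).1 (hind _ _ hp).2
  have hrange : θ.range = closure {x, y} := by
    rw [show θ.range = _ from MonoidHom.noncommCoprod_range _ _ _, range_zpowersHom,
      range_zpowersHom, zpowers_eq_closure, zpowers_eq_closure, ← Subgroup.closure_union,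
      Set.singleton_union]
  exact ⟨(MulEquiv.subgroupCongr hrange).symm.trans <|
    (MonoidHom.ofInjective hθ).symm.trans (MulEquiv.prodMultiplicative _ _).symm⟩

namespace Monoid.PushoutI

variable {G : Bool → Type*} [∀ i, Group (G i)] {C : Type*} [Group C] {φ : ∀ i, C →* G i}
  {u : G true} {v : G false}

lemma exists_reduced_word_prod_eq_of_mul_pow (hu : u ∉ (φ true).range)
    (hv : v ∉ (φ false).range) (k : ℕ) :
    ∃ w : Word G, Reduced φ w ∧ w.fstIdx = some false ∧
      ofCoprodI w.prod = of (φ := φ) false v * (of true u * of false v) ^ k := by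
  have hv1 : v ≠ 1 := fun h => hv (h ▸ one_mem _)
  have hu1 : u ≠ 1 := fun h => hu (h ▸ one_mem _)
  induction k with
  | zero =>
    have hfst : (Word.empty : Word G).fstIdx ≠ some false :=
      Word.fstIdx_ne_iff.mpr fun _ h => by simp [Word.empty] at h
    refine ⟨Word.cons v .empty hfst hv1, ?_, rfl, ?_⟩
    · simpa [Reduced, Word.empty] using hv
    · rw [Word.prod_cons, Word.prod_empty, mul_one, ofCoprodI_of, pow_zero, mul_one]
  | succ k ih =>
    obtain ⟨w, hred, hfst, hprod⟩ := ih
    let w₁ := Word.cons u w (by simp [hfst]) hu1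
    refine ⟨Word.cons v w₁ (by simp [w₁]) hv1, ?_, rfl, ?_⟩
    · simp only [Reduced, Word.cons, w₁, List.mem_cons, forall_eq_or_imp]
      exact ⟨hv, hu, hred⟩
    · simp only [w₁, Word.prod_cons, map_mul, ofCoprodI_of, hprod, pow_succ', mul_assoc]

lemma of_mul_of_mul_pow_ne_one (hφ : ∀ i, Injective (φ i)) {u₀ : G true}
    (hu₀ : u₀ ∉ (φ true).range) (hu : u ∉ (φ true).range) (hv : v ∉ (φ false).range) (k : ℕ) :
    of (φ := φ) true u₀ * of false v * (of true u * of false v) ^ k ≠ 1 := by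
  obtain ⟨w, hred, hfst, hprod⟩ := exists_reduced_word_prod_eq_of_mul_pow hu hv k
  let w₀ := Word.cons u₀ w (by simp [hfst]) fun h => hu₀ (h ▸ one_mem _)
  have hred₀ : Reduced φ w₀ := by
    simp only [Reduced, Word.cons, w₀, List.mem_cons, forall_eq_or_imp]
    exact ⟨hu₀, hred⟩
  intro h1
  have hw₀ : ofCoprodI (φ := φ) w₀.prod = 1 := by
    rw [Word.prod_cons, map_mul, ofCoprodI_of, hprod, ← mul_assoc, h1]
  have := hred₀.eq_empty_of_mem_range hφ ⟨1, by rw [map_one, hw₀]⟩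
  simp [w₀, Word.cons, Word.empty] at this

end Monoid.PushoutI

universe u

-- Reducible, so that elements of `A` and `B` are accepted as elements of the two factors.
@[reducible] def PinchedFactor (A B : Type u) : Bool → Type u
  | true => A
  | false => B

instance {A B : Type u} [Group A] [Group B] : ∀ b, Group (PinchedFactor A B b)
  | true => ‹Group A›
  | false => ‹Group B›

section Pinched

variable {A B : Type u} [Group A] [Group B]

def pinchedHom (g : A) (h : B) (n m : ℕ) : ∀ b, Multiplicative ℤ →* PinchedFactor A B b
  | true => zpowersHom A (g ^ n)
  | false => zpowersHom B (h ^ m)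

variable (g : A) (h : B) (n m : ℕ)

abbrev CyclicallyPinched := PushoutI (pinchedHom g h n m)

local notation "ι₁" => PushoutI.of (φ := pinchedHom g h n m) true
local notation "ι₂" => PushoutI.of (φ := pinchedHom g h n m) false

lemma CyclicallyPinched.of_pow_eq_of_pow : ι₁ (g ^ n) = ι₂ (h ^ m) := by
  have := (of_apply_eq_base (pinchedHom g h n m) true (.ofAdd 1)).trans
    (of_apply_eq_base _ false _).symm
  simpa [pinchedHom] using this

variable {g h n m} [IsMulTorsionFree A] [IsMulTorsionFree B]

lemma pinchedHom_injective (hg : g ≠ 1) (hh : h ≠ 1) (hn : n ≠ 0) (hm : m ≠ 0) :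
    ∀ b, Injective (pinchedHom g h n m b)
  | true => zpowersHom_pow_injective hg hn
  | false => zpowersHom_pow_injective hh hm

variable (hg : g ≠ 1) (hh : h ≠ 1) (hn : 1 < n) (hm : 1 < m)
include hg hh hn hm

lemma CyclicallyPinched.zpow_mul_pow_ne_one (a : ℤ) {k : ℕ} (hk : k ≠ 0) :
    ι₁ (g ^ n) ^ a * (ι₁ g * ι₂ h) ^ k ≠ 1 := by
  obtain ⟨k, rfl⟩ := Nat.exists_eq_add_one_of_ne_zero hk
  have hg' : g ∉ zpowers (g ^ n) := self_notMem_zpowers_pow hg hn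
  have hh' : h ∉ zpowers (h ^ m) := self_notMem_zpowers_pow hh hm
  have := of_mul_of_mul_pow_ne_one (pinchedHom_injective hg hh (by omega) (by omega))
    (u₀ := (g ^ n) ^ a * g) ((mul_mem_cancel_left (zpow_mem (mem_zpowers _) a)).not.mpr hg')
    hg' hh' k
  rw [pow_succ']
  simpa only [map_mul, map_zpow, mul_assoc] using this

lemma CyclicallyPinched.zpow_mul_zpow_eq_one {a b : ℤ}
    (hab : ι₁ (g ^ n) ^ a * (ι₁ g * ι₂ h) ^ b = 1) : a = 0 ∧ b = 0 := by
  have hc : Commute (ι₁ (g ^ n)) (ι₁ g * ι₂ h) := by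
    simpa only [map_pow] using
      Commute.pow_mul_of_pow_eq_pow (by simpa only [map_pow] using of_pow_eq_of_pow g h n m)
  suffices hb : b = 0 by
    subst hb
    rw [zpow_zero, mul_one, ← map_zpow, ← map_one ι₁] at hab
    have := of_injective (pinchedHom_injective hg hh (by omega) (by omega)) true hab
    have hgn : g ^ n ≠ 1 := (pow_eq_one_iff_left (by omega)).not.mpr hg
    exact ⟨(IsMulTorsionFree.zpow_eq_one_iff_right hgn).mp this, rfl⟩
  obtain ⟨k, rfl | rfl⟩ := Int.eq_nat_or_neg b
  · by_contra hk
    exact zpow_mul_pow_ne_one hg hh hn hm a (k := k) (by omega) (by simpa using hab)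
  · by_contra hk
    apply zpow_mul_pow_ne_one hg hh hn hm (-a) (k := k) (by omega)
    calc ι₁ (g ^ n) ^ (-a) * (ι₁ g * ι₂ h) ^ k
        = ((ι₁ g * ι₂ h) ^ (-(k : ℤ)) * ι₁ (g ^ n) ^ a)⁻¹ := by
          rw [mul_inv_rev, zpow_neg, zpow_neg, inv_inv, zpow_natCast]
      _ = 1 := by rw [← (hc.zpow_zpow a _).eq, hab, inv_one]

end Pinched

namespace FreeGroup

variable {α β G : Type*} [Group G] (φ₁ : FreeGroup α →* G) (φ₂ : FreeGroup β →* G)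

lemma lift_sumElim_map_inl (u : FreeGroup α) :
    lift (Sum.elim (φ₁ ∘ of) (φ₂ ∘ of)) (map Sum.inl u) = φ₁ u := by
  induction u using FreeGroup.induction_on <;> simp_all

lemma lift_sumElim_map_inr (v : FreeGroup β) :
    lift (Sum.elim (φ₁ ∘ of) (φ₂ ∘ of)) (map Sum.inr v) = φ₂ v := by
  induction v using FreeGroup.induction_on <;> simp_all

end FreeGroup

section Presentation

variable {α β : Type u} (g : FreeGroup α) (h : FreeGroup β) (n m : ℕ)

local notation "ι₁" => PushoutI.of (φ := pinchedHom g h n m) true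
local notation "ι₂" => PushoutI.of (φ := pinchedHom g h n m) false

def CyclicallyPinched.ofPresentedGroup :
    PresentedGroup {FreeGroup.map Sum.inl (g ^ n) * (FreeGroup.map Sum.inr (h ^ m))⁻¹} →*
      CyclicallyPinched g h n m :=
  PresentedGroup.toGroup (f := Sum.elim (ι₁ ∘ FreeGroup.of) (ι₂ ∘ FreeGroup.of)) <| by
    rintro _ rfl
    rw [map_mul, map_inv, FreeGroup.lift_sumElim_map_inl, FreeGroup.lift_sumElim_map_inr,
      CyclicallyPinched.of_pow_eq_of_pow, mul_inv_cancel]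

end Presentation

/-- In the cyclically pinched one-relator group
`G = F₁ *_{U = V} F₂ = ⟨F₁ ⊔ F₂ ; gⁿ = hᵐ⟩`, with `g ≠ 1` in the free group `F₁`,
`h ≠ 1` in the free group `F₂` and `n, m > 1`, the subgroup generated by `gⁿ` and
`g h` is free abelian of rank 2. -/
theorem cyclically_pinched_zsq_subgroup {α β : Type} (g : FreeGroup α) (h : FreeGroup β)
    (hg : g ≠ 1) (hh : h ≠ 1) (n m : ℕ) (hn : 1 < n) (hm : 1 < m) :
    let ι₁ : FreeGroup α →* FreeGroup (α ⊕ β) := FreeGroup.map Sum.inl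
    let ι₂ : FreeGroup β →* FreeGroup (α ⊕ β) := FreeGroup.map Sum.inr
    let rels : Set (FreeGroup (α ⊕ β)) := {ι₁ (g ^ n) * (ι₂ (h ^ m))⁻¹}
    let π : FreeGroup (α ⊕ β) →* PresentedGroup rels := PresentedGroup.mk rels
    let H : Subgroup (PresentedGroup rels) :=
      Subgroup.closure {π (ι₁ g) ^ n, π (ι₁ g) * π (ι₂ h)}
    Nonempty (H ≃* Multiplicative (ℤ × ℤ)) := by
  intro ι₁ ι₂ rels π H
  let ψ := CyclicallyPinched.ofPresentedGroup g h n m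
  have hψ₁ (u : FreeGroup α) : ψ (π (ι₁ u)) = PushoutI.of true u :=
    FreeGroup.lift_sumElim_map_inl _ _ u
  have hψ₂ (v : FreeGroup β) : ψ (π (ι₂ v)) = PushoutI.of false v :=
    FreeGroup.lift_sumElim_map_inr _ _ v
  have hrel : π (ι₁ g) ^ n = π (ι₂ h) ^ m := by
    simp only [← map_pow]
    exact PresentedGroup.mk_eq_mk_of_mul_inv_mem rfl
  refine (Commute.pow_mul_of_pow_eq_pow hrel).nonempty_closure_pair_mulEquiv fun a b hab => ?_
  apply CyclicallyPinched.zpow_mul_zpow_eq_one hg hh hn hm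
  simpa only [map_mul, map_zpow, map_pow, map_one, hψ₁, hψ₂] using congrArg ψ hab
end

section
/- Let G = ⟨g, h ; gⁿ = hᵐ⟩ with n, m ≥ 2 and (n,m) ≠ (2,2). Then the subgroup H = ⟨gⁿ, gh⟩ has infinite index in G. -/
/-!
Killing the common power `gⁿ = hᵐ` maps `G` onto the free product `ℤ/n * ℤ/m` and sends `H`
into the cyclic subgroup generated by `a b`, where `a`, `b` are the images of `g`, `h`. Say `a`
has order at least `3` (otherwise pass to `(a b)⁻¹ = b⁻¹ a⁻¹`). Then no positive power of `a² b`
lies in `⟨a b⟩`: the reduced word of `(a² b)ᵏ` begins with `a²`, while that of `(a b)ᵗ` is empty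
or begins with `a` or `b⁻¹`. Hence `⟨a b⟩`, and with it `H`, has infinite index.
-/

/-- The relator `gⁿ h⁻ᵐ` presenting `⟨g, h ; gⁿ = hᵐ⟩`; `false` is `g`, `true` is `h`. -/
def PowRels (n m : ℕ) : Set (FreeGroup Bool) :=
  {FreeGroup.of false ^ n * (FreeGroup.of true ^ m)⁻¹}

namespace Monoid.CoprodI.NeWord

variable {ι : Type*} {M : ι → Type*} [∀ i, Monoid (M i)]

theorem prod_ne_one [DecidableEq ι] [∀ i, DecidableEq (M i)] {i j : ι} (w : NeWord M i j) :
    w.prod ≠ 1 := by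
  intro h
  have : w.toWord = Word.empty :=
    Word.equiv.symm.injective (h.trans Word.prod_empty.symm)
  exact w.toList_ne_nil (congrArg Word.toList this)

theorem head_eq_of_prod_eq [DecidableEq ι] [∀ i, DecidableEq (M i)] {i j k l : ι}
    {w₁ : NeWord M i j} {w₂ : NeWord M k l} (h : w₁.prod = w₂.prod) :
    (⟨i, w₁.head⟩ : Σ i, M i) = ⟨k, w₂.head⟩ := by
  have : w₁.toWord = w₂.toWord := Word.equiv.symm.injective h
  have heads : w₁.toList.head? = w₂.toList.head? :=
    congrArg (fun w : Word M => w.toList.head?) this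
  rw [toList_head?, toList_head?] at heads
  exact Option.some_injective _ heads

/-- The reduced word `w w ⋯ w` with `d + 1` copies of `w`. -/
def powSucc {i j : ι} (w : NeWord M i j) (hji : j ≠ i) : ℕ → NeWord M i j
  | 0 => w
  | d + 1 => append w hji (powSucc w hji d)

@[simp]
theorem powSucc_head {i j : ι} (w : NeWord M i j) (hji : j ≠ i) (d : ℕ) :
    (w.powSucc hji d).head = w.head := by
  cases d <;> rfl

@[simp]
theorem powSucc_prod {i j : ι} (w : NeWord M i j) (hji : j ≠ i) (d : ℕ) :
    (w.powSucc hji d).prod = w.prod ^ (d + 1) := by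
  induction d with
  | zero => simp [powSucc]
  | succ d ih => rw [powSucc, append_prod, ih, ← pow_succ']

end Monoid.CoprodI.NeWord

namespace Monoid.CoprodI

open Subgroup

variable {ι : Type*} [DecidableEq ι] {G : ι → Type*} [∀ i, Group (G i)] [∀ i, DecidableEq (G i)]
  {i j : ι}

theorem of_mul_of_pow_succ_notMem_zpowers (hij : i ≠ j) {a a' : G i} {b b' : G j}
    (ha : a ≠ 1) (hb : b ≠ 1) (ha' : a' ≠ 1) (hb' : b' ≠ 1) (haa' : a' ≠ a) (d : ℕ) :
    (of a' * of b') ^ (d + 1) ∉ zpowers (of a * of b) := by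
  let ab (x : G i) (y : G j) (hx : x ≠ 1) (hy : y ≠ 1) : NeWord G i j :=
    .append (.singleton x hx) hij (.singleton y hy)
  have ab_prod (x y hx hy) : (ab x y hx hy).prod = of x * of y := by simp [ab]
  let lhs := (ab a' b' ha' hb').powSucc hij.symm d
  have lhs_prod : lhs.prod = (of a' * of b') ^ (d + 1) := by simp [lhs, ab_prod]
  have lhs_ne_one : (of a' * of b') ^ (d + 1) ≠ 1 := lhs_prod ▸ lhs.prod_ne_one
  rintro ⟨t, ht⟩
  obtain ⟨_ | k, rfl | rfl⟩ := Int.eq_nat_or_neg t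
  all_goals simp only [zpow_neg, zpow_natCast, pow_zero, inv_one] at ht
  · exact lhs_ne_one ht.symm
  · exact lhs_ne_one ht.symm
  · let rhs := (ab a b ha hb).powSucc hij.symm k
    have h := NeWord.head_eq_of_prod_eq (w₁ := lhs) (w₂ := rhs)
      (by simp [lhs_prod, rhs, ab_prod, ← ht])
    exact haa' (by simpa [lhs, rhs, ab] using h)
  · let rhs := ((ab a b ha hb).powSucc hij.symm k).inv
    have h := NeWord.head_eq_of_prod_eq (w₁ := lhs) (w₂ := rhs)
      (by simp [lhs_prod, rhs, ab_prod, ← ht])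
    exact hij (Sigma.mk.inj_iff.mp h).1

theorem index_zpowers_of_mul_of_eq_zero_of_sq_ne_one (hij : i ≠ j) {a : G i} {b : G j}
    (ha : a ≠ 1) (hb : b ≠ 1) (ha2 : a ^ 2 ≠ 1) : (zpowers (of a * of b)).index = 0 := by
  by_contra hfin
  obtain ⟨k, hk, -, hmem⟩ := exists_pow_mem_of_index_ne_zero hfin (of (a ^ 2) * of b)
  obtain ⟨d, rfl⟩ := Nat.exists_eq_succ_of_ne_zero hk.ne'
  have ha2a : a ^ 2 ≠ a := fun h => ha (by simpa [pow_two] using h)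
  exact of_mul_of_pow_succ_notMem_zpowers hij ha hb ha2 hb ha2a d hmem

theorem index_zpowers_of_mul_of_eq_zero (hij : i ≠ j) {a : G i} {b : G j}
    (ha : a ≠ 1) (hb : b ≠ 1) (hab : a ^ 2 ≠ 1 ∨ b ^ 2 ≠ 1) :
    (zpowers (of a * of b)).index = 0 := by
  rcases hab with ha2 | hb2
  · exact index_zpowers_of_mul_of_eq_zero_of_sq_ne_one hij ha hb ha2
  · have hinv : zpowers (of b⁻¹ * of a⁻¹) = zpowers (of a * of b) := by
      rw [map_inv, map_inv, ← mul_inv_rev, zpowers_inv]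
    rw [← hinv]
    exact index_zpowers_of_mul_of_eq_zero_of_sq_ne_one hij.symm (inv_ne_one.2 hb)
      (inv_ne_one.2 ha) (by rwa [inv_pow, inv_ne_one])

end Monoid.CoprodI

theorem ZMod.orderOf_ofAdd_one (k : ℕ) : orderOf (Multiplicative.ofAdd (1 : ZMod k)) = k := by
  rw [orderOf_ofAdd_eq_addOrderOf, ZMod.addOrderOf_one]

theorem ZMod.ofAdd_one_pow_self (k : ℕ) : Multiplicative.ofAdd (1 : ZMod k) ^ k = 1 := by
  simpa only [ZMod.orderOf_ofAdd_one] using pow_orderOf_eq_one (Multiplicative.ofAdd (1 : ZMod k))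

theorem ZMod.zpow_ofAdd_one_surjective (k : ℕ) :
    Function.Surjective fun t : ℤ => Multiplicative.ofAdd (1 : ZMod k) ^ t := by
  intro x
  obtain ⟨t, ht⟩ := ZMod.intCast_surjective (Multiplicative.toAdd x)
  exact ⟨t, by simp only [← ofAdd_zsmul, zsmul_one, ht, ofAdd_toAdd]⟩

theorem ZMod.ofAdd_one_pow_ne_one {k d : ℕ} (hd : d ≠ 0) (hdk : d < k) :
    Multiplicative.ofAdd (1 : ZMod k) ^ d ≠ 1 :=
  pow_ne_one_of_lt_orderOf hd (by rwa [ZMod.orderOf_ofAdd_one])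

abbrev CyclicFactors (n m : ℕ) (b : Bool) : Type := Multiplicative (ZMod (cond b m n))

def PowRels.toCyclicCoprod (n m : ℕ) :
    PresentedGroup (PowRels n m) →* Monoid.CoprodI (CyclicFactors n m) :=
  PresentedGroup.toGroup (f := fun b => .of (i := b) (Multiplicative.ofAdd 1)) <| by
    rintro r rfl
    simp only [map_mul, map_inv, map_pow, FreeGroup.lift_apply_of]
    rw [← map_pow Monoid.CoprodI.of, ← map_pow Monoid.CoprodI.of]
    erw [ZMod.ofAdd_one_pow_self n, ZMod.ofAdd_one_pow_self m]
    rw [map_one, map_one, inv_one, mul_one]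

theorem PowRels.toCyclicCoprod_of (n m : ℕ) (b : Bool) :
    PowRels.toCyclicCoprod n m (PresentedGroup.of b) =
      Monoid.CoprodI.of (i := b) (Multiplicative.ofAdd 1) :=
  PresentedGroup.toGroup.of _

theorem PowRels.toCyclicCoprod_surjective (n m : ℕ) :
    Function.Surjective (PowRels.toCyclicCoprod n m) := by
  intro x
  induction x using Monoid.CoprodI.induction_on with
  | one => exact ⟨1, map_one _⟩
  | of b x =>
    obtain ⟨t, rfl⟩ := ZMod.zpow_ofAdd_one_surjective _ x
    exact ⟨PresentedGroup.of b ^ t, by rw [map_zpow, toCyclicCoprod_of, map_zpow]⟩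
  | mul x y hx hy =>
    obtain ⟨x', rfl⟩ := hx
    obtain ⟨y', rfl⟩ := hy
    exact ⟨x' * y', map_mul _ x' y'⟩

/-- In `G = ⟨g, h ; gⁿ = hᵐ⟩` with `n, m ≥ 2` and `(n,m) ≠ (2,2)`, the subgroup
`H = ⟨gⁿ, g h⟩` has infinite index in `G`. -/
theorem pow_amalgam_subgroup_infinite_index (n m : ℕ) (hn : 2 ≤ n) (hm : 2 ≤ m)
    (hnm : (n, m) ≠ (2, 2)) :
    let g : PresentedGroup (PowRels n m) := PresentedGroup.of false
    let h : PresentedGroup (PowRels n m) := PresentedGroup.of true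
    (Subgroup.closure {g ^ n, g * h}).index = 0 := by
  intro g h
  let φ := PowRels.toCyclicCoprod n m
  let a : CyclicFactors n m false := Multiplicative.ofAdd 1
  let b : CyclicFactors n m true := Multiplicative.ofAdd 1
  have ha : a ≠ 1 := by rw [← pow_one a]; exact ZMod.ofAdd_one_pow_ne_one one_ne_zero hn
  have hb : b ≠ 1 := by rw [← pow_one b]; exact ZMod.ofAdd_one_pow_ne_one one_ne_zero hm
  have hφg : φ g = .of a := PowRels.toCyclicCoprod_of n m false
  have hφh : φ h = .of b := PowRels.toCyclicCoprod_of n m true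
  have han : a ^ n = 1 := ZMod.ofAdd_one_pow_self n
  have image_le : (Subgroup.closure {g ^ n, g * h}).map φ ≤ Subgroup.zpowers (.of a * .of b) := by
    rw [MonoidHom.map_closure, Subgroup.closure_le, Set.image_pair, Set.pair_subset_iff,
      map_pow, map_mul, hφg, hφh, ← map_pow, han, map_one]
    exact ⟨Subgroup.one_mem _, Subgroup.mem_zpowers _⟩
  have hindex : (Subgroup.zpowers (Monoid.CoprodI.of a * .of b)).index = 0 := by
    refine Monoid.CoprodI.index_zpowers_of_mul_of_eq_zero Bool.false_ne_true ha hb ?_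
    obtain h3 | h3 : 3 ≤ n ∨ 3 ≤ m := by
      by_contra! hsmall
      exact hnm (by rw [show n = 2 by omega, show m = 2 by omega])
    · exact .inl (ZMod.ofAdd_one_pow_ne_one two_ne_zero h3)
    · exact .inr (ZMod.ofAdd_one_pow_ne_one two_ne_zero h3)
  exact Nat.eq_zero_of_zero_dvd <| (hindex ▸ Subgroup.index_dvd_of_le image_le).trans
    (Subgroup.index_map_dvd _ (PowRels.toCyclicCoprod_surjective n m))
end

section
/- Let G = ⟨a₁,…,a_n, t ; t U t⁻¹ = U^k⟩ with n > 1 and U a nontrivial element of the free group F on a₁,…,a_n. Then the subgroup K = ⟨U, t⟩ has infinite index in G. -/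
/-- Let `G = ⟨a₁, …, aₙ, t ; t U t⁻¹ = Uᵏ⟩` with `n > 1` and `U` a nontrivial
element of the free group on `a₁, …, aₙ`. Then the subgroup `K = ⟨U, t⟩` has
infinite index in `G`. -/
theorem conjugacy_pinched_subgroup_infinite_index (n : ℕ) (hn : 1 < n)
    (U : FreeGroup (Fin n)) (hU : U ≠ 1) (k : ℤ) :
    let ι : FreeGroup (Fin n) →* FreeGroup (Fin n ⊕ Unit) := FreeGroup.map Sum.inl
    let t : FreeGroup (Fin n ⊕ Unit) := FreeGroup.of (Sum.inr ())
    let rels : Set (FreeGroup (Fin n ⊕ Unit)) := {t * ι U * t⁻¹ * (ι U ^ k)⁻¹}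
    let π : FreeGroup (Fin n ⊕ Unit) →* PresentedGroup rels := PresentedGroup.mk rels
    (Subgroup.closure {π (ι U), π t}).index = 0 := by
  intro ι t rels π
  -- abelianization map to `ℤ^n`
  let M := Multiplicative (Fin n → ℤ)
  let f0 : FreeGroup (Fin n) →* M :=
    FreeGroup.lift fun i => Multiplicative.ofAdd (Pi.single i (1 : ℤ))
  let v : M := f0 U
  let w : Fin n → ℤ := Multiplicative.toAdd v
  let H : Subgroup M := Subgroup.closure {v}
  let A := M ⧸ H
  let f : Fin n ⊕ Unit → A :=
    Sum.elim (fun i => QuotientGroup.mk (Multiplicative.ofAdd (Pi.single i (1 : ℤ)))) fun _ => 1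
  have hcomp : (FreeGroup.lift f).comp ι = (QuotientGroup.mk' H).comp f0 := by
    apply FreeGroup.ext_hom
    intro a
    simp [ι, f, f0]
  have hιU : FreeGroup.lift f (ι U) = QuotientGroup.mk v := by
    have := DFunLike.congr_fun hcomp U
    simpa using this
  have hv1 : (QuotientGroup.mk v : A) = 1 := by
    rw [← QuotientGroup.mk_one, QuotientGroup.eq]
    simpa using Subgroup.inv_mem H (Subgroup.mem_closure_singleton_self v)
  have h_rel : ∀ r ∈ rels, FreeGroup.lift f r = 1 := by
    intro r hr
    rw [Set.mem_singleton_iff.mp hr]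
    simp [hιU, hv1, t, f]
  let χ : PresentedGroup rels →* A := PresentedGroup.toGroup h_rel
  have hχπ : ∀ x, χ (π x) = FreeGroup.lift f x := fun x => rfl
  -- the subgroup is contained in the kernel of χ
  have hle : Subgroup.closure {π (ι U), π t} ≤ χ.ker := by
    rw [Subgroup.closure_le]
    rintro x (rfl | rfl) <;> simp only [SetLike.mem_coe, MonoidHom.mem_ker, hχπ]
    · rw [hιU, hv1]
    · simp [t, f]
  -- a coordinate along which the quotient is infinite
  have hkey : ∃ j' : Fin n, ∀ c d : ℤ, Pi.single j' d = c • w → d = 0 := by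
    by_cases hw : w = 0
    · refine ⟨⟨0, by omega⟩, fun c d h => ?_⟩
      have := congr_fun h ⟨0, by omega⟩
      simpa [hw] using this
    · obtain ⟨j, hj⟩ := Function.ne_iff.mp hw
      replace hj : w j ≠ 0 := by simpa using hj
      haveI : Nontrivial (Fin n) := Fin.nontrivial_iff_two_le.mpr hn
      obtain ⟨j', hj'⟩ := exists_ne j
      refine ⟨j', fun c d h => ?_⟩
      have h1 := congr_fun h j
      rw [Pi.single_eq_of_ne hj'.symm] at h1
      have hc : c = 0 := by
        have : c * w j = 0 := by simpa [Pi.smul_apply, smul_eq_mul] using h1.symm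
        rcases mul_eq_zero.mp this with h | h
        · exact h
        · exact absurd h hj
      have h2 := congr_fun h j'
      simpa [hc] using h2
  obtain ⟨j', hj'⟩ := hkey
  -- an injection of ℤ into the range of χ
  have hinj : Function.Injective
      (fun m : ℤ => (QuotientGroup.mk (Multiplicative.ofAdd (Pi.single j' m)) : A)) := by
    intro m m' h
    rw [QuotientGroup.eq] at h
    rw [Subgroup.mem_closure_singleton] at h
    obtain ⟨c, hc⟩ := h
    have h3 : (-Pi.single j' m + Pi.single j' m' : Fin n → ℤ) = Pi.single j' (m' - m) := by
      ext i
      rcases eq_or_ne i j' with rfl | hi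
      · simp [sub_eq_neg_add]
      · simp [Pi.single_eq_of_ne hi]
    have h2 := congr_arg Multiplicative.toAdd hc
    rw [toAdd_zpow, toAdd_mul, toAdd_inv] at h2
    have h4 : Pi.single j' (m' - m) = c • w := h3.symm.trans h2.symm
    have := hj' c (m' - m) h4
    omega
  have hmem : ∀ m : ℤ,
      (QuotientGroup.mk (Multiplicative.ofAdd (Pi.single j' m)) : A) ∈ χ.range := by
    intro m
    refine ⟨π ((FreeGroup.of (Sum.inl j')) ^ m), ?_⟩
    rw [hχπ]
    simp only [map_zpow, FreeGroup.lift_apply_of]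
    show (QuotientGroup.mk (Multiplicative.ofAdd (Pi.single j' (1:ℤ))) : A) ^ m = _
    rw [← QuotientGroup.mk_zpow]
    congr 1
    rw [← ofAdd_zsmul]
    congr 1
    ext i
    rcases eq_or_ne i j' with rfl | hi
    · simp
    · simp [Pi.single_eq_of_ne hi]
  haveI : Infinite χ.range := by
    refine Infinite.of_injective (fun m : ℤ => (⟨_, hmem m⟩ : χ.range)) ?_
    intro m m' h
    exact hinj (congr_arg Subtype.val h)
  have hker : χ.ker.index = 0 := by
    rw [Subgroup.index_ker]
    exact Nat.card_eq_zero_of_infinite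
  have hdvd := Subgroup.index_dvd_of_le hle
  rw [hker] at hdvd
  exact eq_zero_of_zero_dvd hdvd
end
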